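/- For natural numbers x and y, x + y = 2*x*y if and only if (2^(2^x))^(2^y) = (2^((2^x)^y))^((2^x)^y). -/
import Mathlib

theorem stmt_1 (x y : ℕ) :
    x + y = 2 * x * y ↔ (2 ^ (2 ^ x)) ^ (2 ^ y) = (2 ^ ((2 ^ x) ^ y)) ^ ((2 ^ x) ^ y) := by
  rw [← pow_mul, ← pow_mul, ← pow_add, ← pow_add, ← pow_mul]
  constructor
  · intro h; rw [h]; ring_nf
  · intro h
    have h2 := Nat.pow_right_injective (le_refl 2) h
    have h3 := Nat.pow_right_injective (le_refl 2) h2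
    linarith [h3]
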